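/- Fix k ∈ ℕ. Consider k-relations whose underlying types are of the form Fin m with m ≥ 1 (every k-relation is isomorphic to one of these), and let ≈ be the equivalence relation on this set generated by: C ≈ C' whenever there exists a morphism of k-relations C → C'. Then for all k-relations C, C' one has C ≈ C' if and only if r(C) and r(C') are isomorphic. Consequently, the map C ↦ isomorphism class of r(C) induces a bijection from the set of ≈-equivalence classes of k-relations onto the set of isomorphism classes of reduced k-relations. (This is the combinatorial core of the computation identifying (HB ∧ HB)(k₊) with the pointed set of isomorphism classes of reduced k-relations.) -/
import Mathlib


/-- A `k`-relation: nonempty finite types `F`, `G` and a map `v : F × G → Fin (k+1)`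
with no identically zero row or column. -/
structure KRel (k : ℕ) where
  F : Type
  G : Type
  [finF : Fintype F]
  [finG : Fintype G]
  [neF : Nonempty F]
  [neG : Nonempty G]
  v : F × G → Fin (k + 1)
  hrow : ∀ x : F, ∃ y : G, v (x, y) ≠ 0
  hcol : ∀ y : G, ∃ x : F, v (x, y) ≠ 0

attribute [instance] KRel.finF KRel.finG KRel.neF KRel.neG

/-- A morphism of `k`-relations: a pair of surjections compatible with the values. -/
def IsHom {k : ℕ} (C C' : KRel k) (f : C.F → C'.F) (g : C.G → C'.G) : Prop :=
  Function.Surjective f ∧ Function.Surjective g ∧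
    ∀ (x : C.F) (y : C.G), C'.v (f x, g y) = C.v (x, y)

/-- A `k`-relation is reduced if no two rows and no two columns coincide. -/
def Reduced {k : ℕ} (C : KRel k) : Prop :=
  (∀ x x' : C.F, (∀ y, C.v (x, y) = C.v (x', y)) → x = x') ∧
  (∀ y y' : C.G, (∀ x, C.v (x, y) = C.v (x, y')) → y = y')

/-- The equivalence relation on rows: equality of the corresponding row of `v`. -/
def rowSetoid {k : ℕ} (C : KRel k) : Setoid C.F where
  r x x' := ∀ y, C.v (x, y) = C.v (x', y)
  iseqv := ⟨fun _ _ => rfl, fun h y => (h y).symm, fun h h' y => (h y).trans (h' y)⟩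

/-- The equivalence relation on columns: equality of the corresponding column of `v`. -/
def colSetoid {k : ℕ} (C : KRel k) : Setoid C.G where
  r y y' := ∀ x, C.v (x, y) = C.v (x, y')
  iseqv := ⟨fun _ _ => rfl, fun h x => (h x).symm, fun h h' x => (h x).trans (h' x)⟩

/-- The canonical reduction `r(C)` of a `k`-relation `C`. -/
noncomputable def reduce {k : ℕ} (C : KRel k) : KRel k where
  F := Quotient (rowSetoid C)
  G := Quotient (colSetoid C)
  finF := Fintype.ofFinite _
  finG := Fintype.ofFinite _
  neF := ⟨Quotient.mk _ (Classical.arbitrary _)⟩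
  neG := ⟨Quotient.mk _ (Classical.arbitrary _)⟩
  v := fun p =>
    Quotient.liftOn₂ p.1 p.2 (fun x y => C.v (x, y))
      (fun _ y x' _ hx hy => (hx y).trans (hy x'))
  hrow := fun qx =>
    Quotient.inductionOn qx fun x =>
      let ⟨y, hy⟩ := C.hrow x
      ⟨Quotient.mk (colSetoid C) y, hy⟩
  hcol := fun qy =>
    Quotient.inductionOn qy fun y =>
      let ⟨x, hx⟩ := C.hcol y
      ⟨Quotient.mk (rowSetoid C) x, hx⟩

/-- An isomorphism of `k`-relations: a morphism whose two components are bijections. -/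
def IsIso {k : ℕ} (C C' : KRel k) : Prop :=
  ∃ (f : C.F → C'.F) (g : C.G → C'.G),
    IsHom C C' f g ∧ Function.Bijective f ∧ Function.Bijective g

/-- A `k`-relation whose underlying types are of the form `Fin m`, `m ≥ 1`. -/
structure KRelF (k : ℕ) where
  m : ℕ
  n : ℕ
  v : Fin (m + 1) × Fin (n + 1) → Fin (k + 1)
  hrow : ∀ x, ∃ y, v (x, y) ≠ 0
  hcol : ∀ y, ∃ x, v (x, y) ≠ 0

/-- The `k`-relation underlying a `Fin`-based `k`-relation. -/
def KRelF.toKRel {k : ℕ} (C : KRelF k) : KRel k where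
  F := Fin (C.m + 1)
  G := Fin (C.n + 1)
  v := C.v
  hrow := C.hrow
  hcol := C.hcol

/-- The relation `∃ morphism C → C'` on `Fin`-based `k`-relations. -/
def MorRel {k : ℕ} (C C' : KRelF k) : Prop :=
  ∃ (f : C.toKRel.F → C'.toKRel.F) (g : C.toKRel.G → C'.toKRel.G),
    IsHom C.toKRel C'.toKRel f g


theorem myIsoRefl {k : ℕ} (C : KRel k) : IsIso C C :=
  ⟨id, id, ⟨Function.surjective_id, Function.surjective_id, fun _ _ => rfl⟩,
    Function.bijective_id, Function.bijective_id⟩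

theorem myHomComp {k : ℕ} {A B C : KRel k} {f g f' g'} (h1 : IsHom A B f g)
    (h2 : IsHom B C f' g') : IsHom A C (f' ∘ f) (g' ∘ g) :=
  ⟨h2.1.comp h1.1, h2.2.1.comp h1.2.1, fun x y => by
    simp only [Function.comp_apply, h2.2.2, h1.2.2]⟩

theorem myIsoSymm {k : ℕ} {C C' : KRel k} (h : IsIso C C') : IsIso C' C := by
  obtain ⟨f, g, ⟨hf, hg, hv⟩, bf, bg⟩ := h
  let ef := Equiv.ofBijective f bf
  let eg := Equiv.ofBijective g bg
  refine ⟨ef.symm, eg.symm, ⟨ef.symm.surjective, eg.symm.surjective, fun x y => ?_⟩,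
    ef.symm.bijective, eg.symm.bijective⟩
  have := hv (ef.symm x) (eg.symm y)
  have h1 : f (ef.symm x) = x := ef.apply_symm_apply x
  have h2 : g (eg.symm y) = y := eg.apply_symm_apply y
  rw [h1, h2] at this
  exact this.symm

theorem myIsoTrans {k : ℕ} {A B C : KRel k} (h1 : IsIso A B) (h2 : IsIso B C) : IsIso A C := by
  obtain ⟨f, g, hfg, bf, bg⟩ := h1
  obtain ⟨f', g', hfg', bf', bg'⟩ := h2
  exact ⟨f' ∘ f, g' ∘ g, myHomComp hfg hfg', bf'.comp bf, bg'.comp bg⟩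

theorem myQuotHom {k : ℕ} (C : KRel k) :
    IsHom C (reduce C) (Quotient.mk (rowSetoid C)) (Quotient.mk (colSetoid C)) :=
  ⟨fun q => ⟨q.out, Quotient.out_eq q⟩, fun q => ⟨q.out, Quotient.out_eq q⟩, fun _ _ => rfl⟩

theorem myReduceIso {k : ℕ} {C C' : KRel k} {f g} (h : IsHom C C' f g) :
    IsIso (reduce C) (reduce C') := by
  obtain ⟨hf, hg, hv⟩ := h
  have wf : ∀ x x' : C.F, (rowSetoid C).r x x' →
      (Quotient.mk (rowSetoid C') (f x)) = Quotient.mk (rowSetoid C') (f x') := by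
    intro x x' hxx'
    refine Quotient.sound fun y' => ?_
    obtain ⟨y, rfl⟩ := hg y'
    rw [hv, hv, hxx']
  have wg : ∀ y y' : C.G, (colSetoid C).r y y' →
      (Quotient.mk (colSetoid C') (g y)) = Quotient.mk (colSetoid C') (g y') := by
    intro y y' hyy'
    refine Quotient.sound fun x' => ?_
    obtain ⟨x, rfl⟩ := hf x'
    rw [hv, hv, hyy']
  have surjF : Function.Surjective (Quotient.lift _ wf) := by
    intro qx'
    induction qx' using Quotient.inductionOn with | h x' =>
    obtain ⟨x, rfl⟩ := hf x'
    exact ⟨Quotient.mk _ x, rfl⟩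
  have surjG : Function.Surjective (Quotient.lift _ wg) := by
    intro qy'
    induction qy' using Quotient.inductionOn with | h y' =>
    obtain ⟨y, rfl⟩ := hg y'
    exact ⟨Quotient.mk _ y, rfl⟩
  refine ⟨Quotient.lift _ wf, Quotient.lift _ wg, ⟨surjF, surjG, ?_⟩,
    ⟨?_, surjF⟩, ⟨?_, surjG⟩⟩
  · intro qx qy
    induction qx using Quotient.inductionOn with | h x =>
    induction qy using Quotient.inductionOn with | h y =>
    exact hv x y
  · intro qx qx'
    induction qx using Quotient.inductionOn with | h x =>
    induction qx' using Quotient.inductionOn with | h x' =>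
    intro heq
    refine Quotient.sound fun y => ?_
    have := Quotient.exact heq (g y)
    rw [hv, hv] at this
    exact this
  · intro qy qy'
    induction qy using Quotient.inductionOn with | h y =>
    induction qy' using Quotient.inductionOn with | h y' =>
    intro heq
    refine Quotient.sound fun x => ?_
    have := Quotient.exact heq (f x)
    rw [hv, hv] at this
    exact this

theorem myFinModel {k : ℕ} (C : KRel k) : ∃ R : KRelF k, IsIso R.toKRel C := by
  have h1 : Fintype.card C.F = (Fintype.card C.F - 1) + 1 :=
    (Nat.succ_pred_eq_of_pos Fintype.card_pos).symm
  have h2 : Fintype.card C.G = (Fintype.card C.G - 1) + 1 :=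
    (Nat.succ_pred_eq_of_pos Fintype.card_pos).symm
  let e : C.F ≃ Fin (Fintype.card C.F - 1 + 1) := Fintype.equivFinOfCardEq h1
  let e' : C.G ≃ Fin (Fintype.card C.G - 1 + 1) := Fintype.equivFinOfCardEq h2
  refine ⟨⟨Fintype.card C.F - 1, Fintype.card C.G - 1,
    fun p => C.v (e.symm p.1, e'.symm p.2), ?_, ?_⟩,
    e.symm, e'.symm, ⟨e.symm.surjective, e'.symm.surjective, fun _ _ => rfl⟩,
    e.symm.bijective, e'.symm.bijective⟩
  · intro x
    obtain ⟨y, hy⟩ := C.hrow (e.symm x)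
    exact ⟨e' y, by simpa using hy⟩
  · intro y
    obtain ⟨x, hx⟩ := C.hcol (e'.symm y)
    exact ⟨e x, by simpa using hx⟩

/-- two (`Fin`-based) `k`-relations are equivalent under the equivalence
relation generated by existence of a morphism iff their reductions are isomorphic;
moreover every reduced `k`-relation is isomorphic to the reduction of some
(`Fin`-based) `k`-relation.  Consequently `C ↦ [r(C)]` induces a bijection from
`≈`-classes of `k`-relations onto isomorphism classes of reduced `k`-relations. -/
theorem stmt8 (k : ℕ) :
    (∀ C C' : KRelF k,
        Relation.EqvGen (MorRel (k := k)) C C' ↔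
          IsIso (reduce C.toKRel) (reduce C'.toKRel)) ∧
    (∀ D : KRelF k, Reduced D.toKRel →
        ∃ C : KRelF k, IsIso (reduce C.toKRel) D.toKRel) := by
  constructor
  · intro C C'
    constructor
    · intro h
      induction h with
      | rel a b hab =>
        obtain ⟨f, g, hfg⟩ := hab
        exact myReduceIso hfg
      | refl a => exact myIsoRefl _
      | symm a b _ ih => exact myIsoSymm ih
      | trans a b c _ _ ih1 ih2 => exact myIsoTrans ih1 ih2
    · intro h
      obtain ⟨R, hR⟩ := myFinModel (reduce C.toKRel)
      obtain ⟨f, g, hfg, _, _⟩ := myIsoSymm hR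
      obtain ⟨f', g', hfg', _, _⟩ := myIsoTrans (myIsoSymm h) (myIsoSymm hR)
      have m1 : MorRel C R := ⟨_, _, myHomComp (myQuotHom C.toKRel) hfg⟩
      have m2 : MorRel C' R := ⟨_, _, myHomComp (myQuotHom C'.toKRel) hfg'⟩
      exact Relation.EqvGen.trans _ _ _ (Relation.EqvGen.rel _ _ m1)
        (Relation.EqvGen.symm _ _ (Relation.EqvGen.rel _ _ m2))
  · intro D hD
    refine ⟨D, Quotient.lift id (fun x x' h => hD.1 x x' h),
      Quotient.lift id (fun y y' h => hD.2 y y' h), ⟨?_, ?_, ?_⟩, ⟨?_, ?_⟩, ⟨?_, ?_⟩⟩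
    · exact fun x => ⟨Quotient.mk _ x, rfl⟩
    · exact fun y => ⟨Quotient.mk _ y, rfl⟩
    · intro qx qy
      induction qx using Quotient.inductionOn with | h x =>
      induction qy using Quotient.inductionOn with | h y =>
      rfl
    · intro qx qx'
      induction qx using Quotient.inductionOn with | h x =>
      induction qx' using Quotient.inductionOn with | h x' =>
      intro heq
      exact Quotient.sound (fun y => by simp only [Quotient.lift_mk, id] at heq; rw [heq])
    · exact fun x => ⟨Quotient.mk _ x, rfl⟩
    · intro qy qy'
      induction qy using Quotient.inductionOn with | h y =>
      induction qy' using Quotient.inductionOn with | h y' =>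
      intro heq
      exact Quotient.sound (fun x => by simp only [Quotient.lift_mk, id] at heq; rw [heq])
    · exact fun y => ⟨Quotient.mk _ y, rfl⟩
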